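/- arXiv:math/0211298 — 2 statements merged into one kernel-verified Lean document; each statement's English description precedes it below -/
import Mathlib

section
/- Let X be a Banach space with dim X = κ and let D be an ultrafilter on a set I. The canonical embedding d_X : X → (X)_D is surjective (maps X onto the ultrapower (X)_D) if and only if D is κ⁺-complete, where κ⁺ is the successor cardinal of κ. -/
open Filter Topology
open scoped ENNReal

noncomputable section

universe u

/-- The subspace `N_D ⊆ ℓ∞(I, X)` of families whose norms tend to `0` along the
ultrafilter `D`. -/
def ultraNullIdeal (I : Type u) (D : Ultrafilter I) (X : Type u)
    [NormedAddCommGroup X] [NormedSpace ℝ X] :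
    Submodule ℝ (lp (fun _ : I => X) ∞) where
  carrier := {f | Filter.Tendsto (fun i => ‖f i‖) (D : Filter I) (nhds 0)}
  zero_mem' := by
    simpa using (tendsto_const_nhds :
      Filter.Tendsto (fun _ : I => (0 : ℝ)) (D : Filter I) (nhds 0))
  add_mem' := by
    intro f g hf hg
    have h := hf.add hg
    rw [add_zero] at h
    refine squeeze_zero (fun i => norm_nonneg _) (fun i => ?_) h
    simpa using norm_add_le (f i) (g i)
  smul_mem' := by
    intro c f hf
    have h : Filter.Tendsto (fun i => ‖c‖ * ‖f i‖) (D : Filter I) (nhds 0) := by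
      simpa using hf.const_mul ‖c‖
    refine squeeze_zero (fun i => norm_nonneg _) (fun i => ?_) h
    simp [norm_smul]

/-- The Banach-space ultrapower `(X)_D = ℓ∞(I,X) / N_D`, with the quotient norm. -/
abbrev Ultrapower (I : Type u) (D : Ultrafilter I) (X : Type u)
    [NormedAddCommGroup X] [NormedSpace ℝ X] : Type u :=
  lp (fun _ : I => X) ∞ ⧸ ultraNullIdeal I D X

/-- The bounded family constantly equal to `x`, as an element of `ℓ∞(I, X)`. -/
def constLp (I : Type u) (X : Type u) [NormedAddCommGroup X] [NormedSpace ℝ X] (x : X) :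
    lp (fun _ : I => X) ∞ :=
  ⟨fun _ => x, memℓp_infty ⟨‖x‖, by rintro r ⟨i, rfl⟩; exact le_rfl⟩⟩

/-- The canonical (diagonal) embedding `d_X : X → (X)_D`. -/
def diagEmbedding (I : Type u) (D : Ultrafilter I) (X : Type u)
    [NormedAddCommGroup X] [NormedSpace ℝ X] (x : X) : Ultrapower I D X :=
  Submodule.Quotient.mk (constLp I X x)

/-- The dimension of a normed space: the least cardinality of a subset whose closed linear
span is the whole space (for infinite-dimensional spaces this is the density character). -/
noncomputable def bdim (X : Type u) [SeminormedAddCommGroup X] [NormedSpace ℝ X] :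
    Cardinal.{u} :=
  sInf {c : Cardinal.{u} |
    ∃ A : Set X, Cardinal.mk A = c ∧ (Submodule.span ℝ A).topologicalClosure = ⊤}

/-- An ultrafilter `D` is `μ`-complete if the intersection of any family of fewer than `μ`
members of `D` again belongs to `D`. -/
def UltrafilterComplete {I : Type u} (D : Ultrafilter I) (μ : Cardinal.{u}) : Prop :=
  ∀ G : Set (Set I), (∀ g ∈ G, g ∈ D) → Cardinal.mk G < μ → ⋂₀ G ∈ D

/-!
Surjectivity of `d_X` says that every bounded family in `X` has a limit along `D`.

If `D` is `κ⁺`-complete, then every cover of `I` by at most `κ` sets has a member in `D`.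
Covering `I` by the preimages of `ε`-balls around a dense set of size at most `κ` (which
exists for infinite `κ`; for finite `κ` the space is finite-dimensional and bounded sets are
totally bounded) shows that the image of `D` under a bounded family is a Cauchy ultrafilter,
which converges as `X` is complete.

Conversely, by Riesz's lemma a maximal `1/2`-separated subset `M` of the unit ball has at least
`κ` points. Given a cover of `I` by at most `κ` sets, send each `i` to the image, under an
injection of the cover into `M`, of a set of the cover containing `i`; the limit of this family
along `D` forces it to be `D`-eventually constant, so one set of the cover lies in `D`. This is
`κ⁺`-completeness.
-/

open Set Metric
open scoped Cardinal

section UltrafilterCompleteness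

variable {I : Type u} {D : Ultrafilter I}

theorem ultrafilterComplete_succ_iff {κ : Cardinal.{u}} :
    UltrafilterComplete D (Order.succ κ) ↔
      ∀ T : Set (Set I), #T ≤ κ → ⋃₀ T = univ → ∃ t ∈ T, t ∈ D := by
  simp only [UltrafilterComplete, Order.lt_succ_iff]
  constructor
  · intro hD T hT hcov
    by_contra! hT'
    have hmem : ⋂₀ (compl '' T) ∈ D :=
      hD _ (forall_mem_image.2 fun t ht => Ultrafilter.compl_mem_iff_notMem.2 (hT' t ht))
        (Cardinal.mk_image_le.trans hT)
    rw [← compl_sUnion, hcov, compl_univ] at hmem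
    exact Ultrafilter.empty_notMem hmem
  · intro hD G hG hGκ
    rcases G.eq_empty_or_nonempty with rfl | ⟨g₀, hg₀⟩
    · exact sInter_empty (α := I) ▸ (D : Filter I).univ_mem
    -- the sets `gᶜ ∪ ⋂₀ G` cover `I`, and the one in `D` meets `g ∈ D` inside `⋂₀ G`
    have hcov : ⋃₀ ((fun g => gᶜ ∪ ⋂₀ G) '' G) = univ := by
      refine eq_univ_of_forall fun i => ?_
      by_cases hi : i ∈ ⋂₀ G
      · exact ⟨_, mem_image_of_mem _ hg₀, Or.inr hi⟩
      · obtain ⟨g, hg, hig⟩ : ∃ g ∈ G, i ∉ g := by simpa [mem_sInter] using hi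
        exact ⟨_, mem_image_of_mem _ hg, Or.inl hig⟩
    obtain ⟨_, ⟨g, hg, rfl⟩, hgD⟩ := hD _ (Cardinal.mk_image_le.trans hGκ) hcov
    exact (Ultrafilter.union_mem_iff.1 hgD).resolve_left
      (Ultrafilter.compl_mem_iff_notMem.not_left.2 (hG g hg))

theorem cauchy_map_of_dense {α : Type u} [PseudoMetricSpace α] {κ : Cardinal.{u}}
    (hD : UltrafilterComplete D (Order.succ κ)) {S : Set α} (hS : Dense S) (hSκ : #S ≤ κ)
    (f : I → α) : Cauchy (map f D) := by
  refine Metric.cauchy_iff.2 ⟨inferInstance, fun ε hε => ?_⟩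
  have hcov : ⋃₀ ((fun s => f ⁻¹' ball s (ε / 2)) '' S) = univ :=
    eq_univ_of_forall fun i =>
      let ⟨s, hs, hi⟩ := hS.exists_dist_lt (f i) (half_pos hε)
      ⟨_, mem_image_of_mem _ hs, hi⟩
  obtain ⟨_, ⟨s, -, rfl⟩, hs⟩ :=
    ultrafilterComplete_succ_iff.1 hD _ (Cardinal.mk_image_le.trans hSκ) hcov
  exact ⟨ball s (ε / 2), hs, fun x hx y hy => by
    linarith [dist_triangle_right x y s, mem_ball.1 hx, mem_ball.1 hy]⟩

theorem cauchy_map_of_totallyBounded_range {α : Type*} [UniformSpace α] {f : I → α}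
    (hf : TotallyBounded (range f)) : Cauchy (map f D) :=
  totallyBounded_iff_ultrafilter.1 hf (D.map f) <| by
    simp [Ultrafilter.coe_map, le_principal_iff]

theorem exists_eventually_eq_of_cauchy_map {α : Type*} [PseudoMetricSpace α] {M : Set α}
    {δ : ℝ} (hδ : 0 < δ) (hM : M.Pairwise fun a b => δ ≤ dist a b) {g : I → α}
    (hg : ∀ i, g i ∈ M) (hc : Cauchy (map g D)) : ∃ i₀, ∀ᶠ i in D, g i = g i₀ := by
  obtain ⟨-, ht⟩ := Metric.cauchy_iff.1 hc
  obtain ⟨t, htD, hdist⟩ := ht δ hδ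
  obtain ⟨i₀, hi₀⟩ := Filter.nonempty_of_mem (mem_map.1 htD)
  exact ⟨i₀, mem_of_superset (mem_map.1 htD) fun i hi =>
    hM.eq (hg i) (hg i₀) (hdist _ hi _ hi₀).not_ge⟩

end UltrafilterCompleteness

section Dimension

variable {X : Type u} [SeminormedAddCommGroup X] [NormedSpace ℝ X]

theorem bdim_le_mk {A : Set X} (h : (Submodule.span ℝ A).topologicalClosure = ⊤) :
    bdim X ≤ #A :=
  csInf_le (OrderBot.bddBelow _) ⟨A, rfl, h⟩

variable (X) in
theorem exists_mk_eq_bdim :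
    ∃ A : Set X, #A = bdim X ∧ (Submodule.span ℝ A).topologicalClosure = ⊤ :=
  csInf_mem (s := {c | ∃ A : Set X, #A = c ∧ (Submodule.span ℝ A).topologicalClosure = ⊤})
    ⟨_, univ, rfl, by
      rw [Submodule.span_univ, ← top_le_iff]; exact Submodule.le_topologicalClosure ⊤⟩

end Dimension

theorem smul_mem_closure_of_forall_ratCast_smul_mem {E : Type*} [AddCommGroup E] [Module ℝ E]
    [TopologicalSpace E] [ContinuousSMul ℝ E] {S : Set E}
    (hS : ∀ q : ℚ, ∀ x ∈ S, (q : ℝ) • x ∈ S) (c : ℝ) {x : E} (hx : x ∈ closure S) :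
    c • x ∈ closure S :=
  Rat.denseRange_cast.induction_on c
    (isClosed_closure.preimage (continuous_id.smul continuous_const))
    fun q => map_mem_closure (continuous_const_smul (q : ℝ)) hx fun y hy => hS q y hy

theorem exists_dense_mk_le_of_topologicalClosure_span_eq_top {E : Type u}
    [AddCommGroup E] [Module ℝ E] [TopologicalSpace E] [IsTopologicalAddGroup E]
    [ContinuousSMul ℝ E]
    {A : Set E} (hA : ℵ₀ ≤ #A) (h : (Submodule.span ℝ A).topologicalClosure = ⊤) :
    ∃ S : Set E, #S ≤ #A ∧ Dense S := by
  let _ : Module ℚ E := Module.compHom E (algebraMap ℚ ℝ)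
  have : Infinite A := Cardinal.infinite_iff.2 hA
  refine ⟨Submodule.span ℚ A, ?_, ?_⟩
  · have hrange := Finsupp.range_linearCombination (R := ℚ) (v := ((↑) : A → E))
    rw [Subtype.range_coe] at hrange
    calc #(Submodule.span ℚ A) ≤ #(A →₀ ℚ) := hrange ▸ Cardinal.mk_range_le
      _ = #A := by
        rw [Cardinal.mk_finsupp_lift_of_infinite, Cardinal.mkRat, Cardinal.lift_uzero,
          Cardinal.lift_aleph0, max_eq_left hA]
  · -- the closure of the `ℚ`-span is already an `ℝ`-submodule
    let P : Submodule ℝ E :=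
      { (Submodule.span ℚ A).toAddSubgroup.topologicalClosure with
        smul_mem' := smul_mem_closure_of_forall_ratCast_smul_mem
          fun q x hx => (Submodule.span ℚ A).smul_mem q hx }
    have hP : (Submodule.span ℝ A).topologicalClosure ≤ P :=
      Submodule.topologicalClosure_minimal _
        (Submodule.span_le.2 fun a ha => subset_closure (Submodule.subset_span ha))
        isClosed_closure
    rw [h, top_le_iff] at hP
    exact dense_iff_closure_eq.2 (congrArg (fun P : Submodule ℝ E => (P : Set E)) hP)

section Ultrapower

variable {I : Type u} {D : Ultrafilter I} {X : Type u} [NormedAddCommGroup X] [NormedSpace ℝ X]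

theorem finiteDimensional_of_bdim_lt_aleph0 (h : bdim X < ℵ₀) : FiniteDimensional ℝ X := by
  obtain ⟨A, hA, hspan⟩ := exists_mk_eq_bdim X
  have hfin : A.Finite := Cardinal.lt_aleph0_iff_set_finite.1 (hA ▸ h)
  have := FiniteDimensional.span_of_finite ℝ hfin
  rw [(Submodule.closed_of_finiteDimensional _).submodule_topologicalClosure_eq] at hspan
  exact ⟨hspan ▸ Submodule.fg_span hfin⟩

theorem exists_dense_mk_le_bdim (h : ℵ₀ ≤ bdim X) :
    ∃ S : Set X, #S ≤ bdim X ∧ Dense S := by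
  obtain ⟨A, hA, hspan⟩ := exists_mk_eq_bdim X
  exact hA ▸ exists_dense_mk_le_of_topologicalClosure_span_eq_top (hA ▸ h) hspan

variable (X) in
theorem exists_separated_subset_closedBall_bdim_le :
    ∃ M ⊆ closedBall (0 : X) 1, M.Pairwise (fun a b => 2⁻¹ ≤ dist a b) ∧ bdim X ≤ #M := by
  let 𝒮 : Set (Set X) := {M | M ⊆ closedBall 0 1 ∧ M.Pairwise fun a b => 2⁻¹ ≤ dist a b}
  obtain ⟨M, hM⟩ := zorn_subset 𝒮 fun c hc hchain =>
    ⟨⋃₀ c, ⟨sUnion_subset fun s hs => (hc hs).1,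
      (pairwise_sUnion hchain.directedOn).2 fun s hs => (hc hs).2⟩,
      fun s hs => subset_sUnion_of_mem hs⟩
  refine ⟨M, hM.prop.1, hM.prop.2, bdim_le_mk ?_⟩
  by_contra hne
  -- a Riesz unit vector far from `span M` would enlarge the maximal set `M`
  obtain ⟨x, hxF, hx1, hsep⟩ := riesz_lemma_of_lt_one (𝕜 := ℝ)
    (Submodule.isClosed_topologicalClosure (Submodule.span ℝ M))
    (not_forall.1 (mt Submodule.eq_top_iff'.2 hne)) (r := 2⁻¹) (by norm_num)
  have hMF : M ⊆ (Submodule.span ℝ M).topologicalClosure := fun m hm =>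
    Submodule.le_topologicalClosure _ (Submodule.subset_span hm)
  have hdist : ∀ m ∈ M, 2⁻¹ ≤ dist x m := fun m hm => by
    rw [dist_eq_norm]; exact hsep m (hMF hm)
  have hins : insert x M ∈ 𝒮 :=
    ⟨insert_subset (mem_closedBall_zero_iff.2 hx1.le) hM.prop.1,
      hM.prop.2.insert fun m hm _ => ⟨hdist m hm, dist_comm x m ▸ hdist m hm⟩⟩
  exact hxF (hMF (hM.2 hins (subset_insert x M) (mem_insert x M)))

theorem diagEmbedding_eq_mk_iff {x : X} {f : lp (fun _ : I => X) ∞} :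
    diagEmbedding I D X x = Submodule.Quotient.mk f ↔ Tendsto (fun i => f i) D (𝓝 x) := by
  rw [diagEmbedding, Submodule.Quotient.eq, tendsto_iff_norm_sub_tendsto_zero]
  simp_rw [norm_sub_rev (f _)]
  rfl

theorem diagEmbedding_surjective_iff :
    Function.Surjective (diagEmbedding I D X) ↔
      ∀ f : lp (fun _ : I => X) ∞, ∃ x, Tendsto (fun i => f i) D (𝓝 x) := by
  unfold Function.Surjective
  rw [(Submodule.Quotient.mk_surjective _).forall]
  simp only [diagEmbedding_eq_mk_iff]

theorem ultrafilterComplete_succ_bdim_of_forall_tendsto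
    (h : ∀ f : lp (fun _ : I => X) ∞, ∃ x, Tendsto (fun i => f i) D (𝓝 x)) :
    UltrafilterComplete D (Order.succ (bdim X)) := by
  refine ultrafilterComplete_succ_iff.2 fun T hT hcov => ?_
  obtain ⟨M, hM1, hMsep, hMcard⟩ := exists_separated_subset_closedBall_bdim_le X
  obtain ⟨e⟩ := (Cardinal.le_def _ _).1 (hT.trans hMcard)
  choose t htT hit using fun i => mem_sUnion.1 (hcov.symm ▸ mem_univ i : i ∈ ⋃₀ T)
  let g : I → X := fun i => e ⟨t i, htT i⟩
  have hg : Memℓp g ∞ :=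
    memℓp_infty ⟨1, forall_mem_range.2 fun i => by simpa using hM1 (e _).2⟩
  obtain ⟨x, hx⟩ := h ⟨g, hg⟩
  obtain ⟨i₀, hi₀⟩ := exists_eventually_eq_of_cauchy_map (by norm_num) hMsep
    (fun i => (e _).2) hx.cauchy_map
  refine ⟨t i₀, htT i₀, mem_of_superset hi₀ fun i hi => ?_⟩
  have hti : t i = t i₀ := congrArg Subtype.val (e.injective (Subtype.ext hi))
  exact hti ▸ hit i

theorem cauchy_map_of_ultrafilterComplete
    (hD : UltrafilterComplete D (Order.succ (bdim X))) (f : lp (fun _ : I => X) ∞) :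
    Cauchy (map (fun i => f i) D) := by
  rcases lt_or_ge (bdim X) ℵ₀ with hfin | hinf
  · have := finiteDimensional_of_bdim_lt_aleph0 hfin
    refine cauchy_map_of_totallyBounded_range
      ((isCompact_closedBall (0 : X) ‖f‖).totallyBounded.subset ?_)
    rintro _ ⟨i, rfl⟩
    exact mem_closedBall_zero_iff.2 (lp.norm_apply_le_norm ENNReal.top_ne_zero f i)
  · obtain ⟨S, hSκ, hS⟩ := exists_dense_mk_le_bdim hinf
    exact cauchy_map_of_dense hD hS hSκ _

end Ultrapower

/-- For a Banach space `X` with `dim X = κ` and an ultrafilter `D` on `I`,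
the canonical embedding `d_X : X → (X)_D` is onto iff `D` is `κ⁺`-complete. -/
theorem diagEmbedding_surjective_iff_succ_complete
    (I : Type u) (D : Ultrafilter I)
    (X : Type u) [NormedAddCommGroup X] [NormedSpace ℝ X] [CompleteSpace X]
    (κ : Cardinal.{u}) (hκ : bdim X = κ) :
    Function.Surjective (diagEmbedding I D X) ↔ UltrafilterComplete D (Order.succ κ) := by
  subst hκ
  rw [diagEmbedding_surjective_iff]
  exact ⟨ultrafilterComplete_succ_bdim_of_forall_tendsto,
    fun hD f => cauchy_map_iff_exists_tendsto.1 (cauchy_map_of_ultrafilterComplete hD f)⟩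
end
end

section
/- Let X be a finite-dimensional real Banach space and let m < dim X. Then H_m(X), the set of isometry classes of m-dimensional subspaces of X equipped with the Banach–Mazur metric log d, is a compact, connected metric space. -/
noncomputable section

universe u

/-- A packaged real Banach space. -/
structure BanachSpace : Type (u + 1) where
  carrier : Type u
  [norm : NormedAddCommGroup carrier]
  [smulR : NormedSpace ℝ carrier]
  [complete : CompleteSpace carrier]

attribute [instance] BanachSpace.norm BanachSpace.smulR BanachSpace.complete

/-- A norm on `ℝ^n`. An `n`-dimensional real Banach space is (isometric to) `ℝ^n`
equipped with such a norm. -/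
structure MNorm (n : ℕ) : Type where
  toFun : (Fin n → ℝ) → ℝ
  add_le' : ∀ x y, toFun (x + y) ≤ toFun x + toFun y
  smul_eq' : ∀ (a : ℝ) (x), toFun (a • x) = |a| * toFun x
  eq_zero' : ∀ x, toFun x = 0 → x = 0

/-- Two norms on `ℝ^n` are identified when they are linearly isometrically equivalent. -/
def mnormSetoid (n : ℕ) : Setoid (MNorm n) where
  r N₁ N₂ := ∃ e : (Fin n → ℝ) ≃ₗ[ℝ] (Fin n → ℝ), ∀ x, N₂.toFun (e x) = N₁.toFun x
  iseqv := by
    constructor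
    · exact fun N => ⟨LinearEquiv.refl ℝ _, fun x => rfl⟩
    · rintro N₁ N₂ ⟨e, he⟩
      refine ⟨e.symm, fun x => ?_⟩
      have h := he (e.symm x)
      rw [e.apply_symm_apply] at h
      exact h.symm
    · rintro N₁ N₂ N₃ ⟨e, he⟩ ⟨f, hf⟩
      exact ⟨e.trans f, fun x => by
        rw [LinearEquiv.trans_apply, hf, he]⟩

/-- The Minkowski compact `𝔐_n`: isometry classes of `n`-dimensional real Banach spaces. -/
def Mink (n : ℕ) : Type := Quotient (mnormSetoid n)

/-- The Minkowski space `𝔐`: the disjoint union of the `𝔐_n`. -/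
def MinkSpace : Type := Σ n : ℕ, Mink n

/-- The operator norm of a linear map `u : (ℝ^n, N₁) → (ℝ^n, N₂)`. -/
noncomputable def opC (n : ℕ) (N₁ N₂ : MNorm n)
    (u : (Fin n → ℝ) →ₗ[ℝ] (Fin n → ℝ)) : ℝ :=
  sInf {C : ℝ | 0 ≤ C ∧ ∀ x, N₂.toFun (u x) ≤ C * N₁.toFun x}

/-- The multiplicative Banach–Mazur distance between two norms on `ℝ^n`:
`inf {‖u‖·‖u⁻¹‖ : u a linear isomorphism}`. -/
noncomputable def mDist (n : ℕ) (N₁ N₂ : MNorm n) : ℝ :=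
  sInf {c : ℝ | ∃ u : (Fin n → ℝ) ≃ₗ[ℝ] (Fin n → ℝ),
    c = opC n N₁ N₂ u.toLinearMap * opC n N₂ N₁ u.symm.toLinearMap}

/-- The Banach–Mazur metric `log d` on `𝔐_n`. -/
noncomputable def minkDist (n : ℕ) (P Q : Mink n) : ℝ :=
  Real.log (mDist n P.out Q.out)

/-- The topology of the Banach–Mazur metric on `𝔐_n` (generated by its open balls). -/
instance minkTopology (n : ℕ) : TopologicalSpace (Mink n) :=
  TopologicalSpace.generateFrom
    {s : Set (Mink n) | ∃ (P : Mink n) (ε : ℝ), 0 < ε ∧ s = {Q | minkDist n P Q < ε}}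

instance : TopologicalSpace MinkSpace := by
  unfold MinkSpace; infer_instance

/-- The class in `𝔐` determined by a norm on `ℝ^n`. -/
def minkClass {n : ℕ} (N : MNorm n) : MinkSpace := ⟨n, Quotient.mk (mnormSetoid n) N⟩

/-- `H(X) ⊆ 𝔐`: the set of isometry classes of finite-dimensional subspaces of `X`.
A class `c` belongs to `H(X)` iff `ℝ^{c.1}` with (a representative of) the norm class `c.2`
embeds linearly isometrically into `X`. -/
def HSet (X : Type u) [SeminormedAddCommGroup X] [NormedSpace ℝ X] : Set MinkSpace :=
  {c : MinkSpace | ∃ f : (Fin c.1 → ℝ) →ₗ[ℝ] X, Function.Injective f ∧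
    ∀ v, ‖f v‖ = (Quotient.out c.2).toFun v}

/-- `H_m(X) ⊆ 𝔐_m`: the set of isometry classes of `m`-dimensional subspaces of `X`. -/
def HmSet (m : ℕ) (X : Type u) [SeminormedAddCommGroup X] [NormedSpace ℝ X] : Set (Mink m) :=
  {P : Mink m | ∃ f : (Fin m → ℝ) →ₗ[ℝ] X, Function.Injective f ∧
    ∀ v, ‖f v‖ = (Quotient.out P).toFun v}

/-!
A linearly independent tuple `a : Fin m → X` induces the norm `v ↦ ‖∑ i, v i • a i‖` on `ℝ^m`,
hence a point of `𝔐_m`. This map is continuous on independent tuples: if `b` is close to `a`,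
the two norms agree up to a factor `1 ± t` with `t → 0`, so their Banach–Mazur distance is at
most `(1 + t) / (1 - t)`. Every `m`-dimensional subspace of `X` is spanned by a tuple that is
orthonormal for a fixed Euclidean structure on `X`, so `H_m(X)` is the image of the compact set
of such frames, and also of the set of all independent `m`-tuples. When `m < dim X` the latter
is path-connected: two independent tuples can be joined by first replacing their last vectors
by a common vector `v` outside both spans (the complement of a subspace of codimension `≥ 2` is
path-connected), and the tuples ending in `v` are, after projecting along `v` onto a
complement, the independent `(m - 1)`-tuples of a space of dimension `dim X - 1`.
-/

namespace MNorm

variable {n : ℕ} (N : MNorm n)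

lemma map_zero : N.toFun 0 = 0 := by
  simpa using N.smul_eq' 0 0

lemma map_neg (x : Fin n → ℝ) : N.toFun (-x) = N.toFun x := by
  simpa using N.smul_eq' (-1) x

lemma nonneg (x : Fin n → ℝ) : 0 ≤ N.toFun x := by
  have h := N.add_le' x (-x)
  rw [add_neg_cancel, map_zero, map_neg] at h
  linarith

lemma pos {x : Fin n → ℝ} (hx : x ≠ 0) : 0 < N.toFun x :=
  (N.nonneg x).lt_of_ne' (mt (N.eq_zero' x) hx)

lemma sum_le {ι : Type*} (s : Finset ι) (f : ι → Fin n → ℝ) :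
    N.toFun (∑ i ∈ s, f i) ≤ ∑ i ∈ s, N.toFun (f i) := by
  classical
  induction s using Finset.induction with
  | empty => simp [map_zero]
  | insert a s ha ih =>
    rw [Finset.sum_insert ha, Finset.sum_insert ha]
    linarith [N.add_le' (f a) (∑ i ∈ s, f i)]

lemma map_le_mul_norm (u : (Fin n → ℝ) →ₗ[ℝ] (Fin n → ℝ)) (x : Fin n → ℝ) :
    N.toFun (u x) ≤ (∑ i, N.toFun (u (Pi.single i 1))) * ‖x‖ := by
  calc N.toFun (u x) = N.toFun (∑ i, x i • u (Pi.single i 1)) := by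
        conv_lhs => rw [← (Pi.basisFun ℝ (Fin n)).sum_repr x]
        simp [map_sum]
    _ ≤ ∑ i, |x i| * N.toFun (u (Pi.single i 1)) := by
        simpa only [N.smul_eq'] using N.sum_le Finset.univ fun i => x i • u (Pi.single i 1)
    _ ≤ ∑ i, ‖x‖ * N.toFun (u (Pi.single i 1)) := by
        gcongr with i
        · exact N.nonneg _
        · exact norm_le_pi_norm x i
    _ = (∑ i, N.toFun (u (Pi.single i 1))) * ‖x‖ := by
        rw [Finset.sum_mul]; simp_rw [mul_comm]

lemma continuous : Continuous N.toFun := by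
  have hb : 0 ≤ ∑ i, N.toFun (Pi.single i 1) := Finset.sum_nonneg fun i _ => N.nonneg _
  refine (LipschitzWith.of_le_add_mul ⟨_, hb⟩ fun x y => ?_).continuous
  have h := N.map_le_mul_norm LinearMap.id (x - y)
  simp only [LinearMap.id_apply] at h
  calc N.toFun x = N.toFun (y + (x - y)) := by rw [add_sub_cancel]
    _ ≤ N.toFun y + (∑ i, N.toFun (Pi.single i 1)) * dist x y := by
        rw [dist_eq_norm]
        linarith [N.add_le' y (x - y)]

lemma exists_pos_mul_norm_le : ∃ c > 0, ∀ x, c * ‖x‖ ≤ N.toFun x := by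
  cases n with
  | zero => exact ⟨1, one_pos, fun x => by
      rw [Subsingleton.elim x 0, norm_zero, mul_zero]; exact N.nonneg 0⟩
  | succ n =>
    obtain ⟨x₀, hx₀, hmin⟩ := (isCompact_sphere (0 : Fin (n + 1) → ℝ) 1).exists_isMinOn
      (NormedSpace.sphere_nonempty.2 zero_le_one) N.continuous.continuousOn
    have hx₀0 : x₀ ≠ 0 := by rintro rfl; simp at hx₀
    refine ⟨N.toFun x₀, N.pos hx₀0, fun x => ?_⟩
    rcases eq_or_ne x 0 with rfl | hx
    · simp [map_zero]
    have hxpos : 0 < ‖x‖ := norm_pos_iff.2 hx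
    have hmem : ‖x‖⁻¹ • x ∈ Metric.sphere (0 : Fin (n + 1) → ℝ) 1 := by
      simp [norm_smul, hxpos.ne']
    have hle : N.toFun x₀ ≤ ‖x‖⁻¹ * N.toFun x := by
      simpa [N.smul_eq', abs_of_pos hxpos] using hmin hmem
    rwa [← div_eq_inv_mul, le_div_iff₀ hxpos] at hle

end MNorm

instance : Subsingleton (MNorm 0) where
  allEq N N' := by
    have h : N.toFun = N'.toFun :=
      funext fun x => by rw [Subsingleton.elim x 0, N.map_zero, N'.map_zero]
    cases N; cases N'; congr

instance : Subsingleton (Mink 0) :=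
  inferInstanceAs (Subsingleton (Quotient (mnormSetoid 0)))

section BanachMazur

variable {n : ℕ}

lemma exists_opC_bound (N₁ N₂ : MNorm n) (u : (Fin n → ℝ) →ₗ[ℝ] (Fin n → ℝ)) :
    ∃ C : ℝ, 0 ≤ C ∧ ∀ x, N₂.toFun (u x) ≤ C * N₁.toFun x := by
  obtain ⟨c, hc, hcN⟩ := N₁.exists_pos_mul_norm_le
  set b := ∑ i, N₂.toFun (u (Pi.single i 1))
  have hb : 0 ≤ b := Finset.sum_nonneg fun i _ => N₂.nonneg _
  refine ⟨b / c, by positivity, fun x => ?_⟩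
  calc N₂.toFun (u x) ≤ b * ‖x‖ := N₂.map_le_mul_norm u x
    _ = b / c * (c * ‖x‖) := by field_simp
    _ ≤ b / c * N₁.toFun x := by gcongr; exact hcN x

lemma opC_nonneg (N₁ N₂ : MNorm n) (u : (Fin n → ℝ) →ₗ[ℝ] (Fin n → ℝ)) :
    0 ≤ opC n N₁ N₂ u :=
  le_csInf (exists_opC_bound N₁ N₂ u) fun _ hC => hC.1

lemma opC_le {N₁ N₂ : MNorm n} {u : (Fin n → ℝ) →ₗ[ℝ] (Fin n → ℝ)} {C : ℝ} (hC : 0 ≤ C)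
    (h : ∀ x, N₂.toFun (u x) ≤ C * N₁.toFun x) : opC n N₁ N₂ u ≤ C :=
  csInf_le ⟨0, fun _ hC => hC.1⟩ ⟨hC, h⟩

lemma le_opC_mul (N₁ N₂ : MNorm n) (u : (Fin n → ℝ) →ₗ[ℝ] (Fin n → ℝ)) (x : Fin n → ℝ) :
    N₂.toFun (u x) ≤ opC n N₁ N₂ u * N₁.toFun x := by
  rcases eq_or_ne x 0 with rfl | hx
  · rw [map_zero, N₂.map_zero, N₁.map_zero, mul_zero]
  have hpos := N₁.pos hx
  rw [← div_le_iff₀ hpos]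
  exact le_csInf (exists_opC_bound N₁ N₂ u) fun C hC => (div_le_iff₀ hpos).2 (hC.2 x)

lemma opC_comp_le (N₁ N₂ N₃ : MNorm n) (u v : (Fin n → ℝ) →ₗ[ℝ] (Fin n → ℝ)) :
    opC n N₁ N₃ (v ∘ₗ u) ≤ opC n N₂ N₃ v * opC n N₁ N₂ u := by
  refine opC_le (mul_nonneg (opC_nonneg _ _ _) (opC_nonneg _ _ _)) fun x => ?_
  calc N₃.toFun (v (u x)) ≤ opC n N₂ N₃ v * N₂.toFun (u x) := le_opC_mul _ _ _ _
    _ ≤ opC n N₂ N₃ v * (opC n N₁ N₂ u * N₁.toFun x) := by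
        gcongr
        · exact opC_nonneg _ _ _
        · exact le_opC_mul _ _ _ _
    _ = opC n N₂ N₃ v * opC n N₁ N₂ u * N₁.toFun x := by ring

lemma opC_conj {N₁ N₂ N₁' N₂' : MNorm n} {e₁ e₂ : (Fin n → ℝ) ≃ₗ[ℝ] (Fin n → ℝ)}
    (h₁ : ∀ x, N₁'.toFun (e₁ x) = N₁.toFun x) (h₂ : ∀ x, N₂'.toFun (e₂ x) = N₂.toFun x)
    (u : (Fin n → ℝ) →ₗ[ℝ] (Fin n → ℝ)) :
    opC n N₁' N₂' (e₂.toLinearMap ∘ₗ u ∘ₗ e₁.symm.toLinearMap) = opC n N₁ N₂ u := by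
  unfold opC
  congr! 3 with C
  refine and_congr_right fun _ => ?_
  rw [← e₁.toEquiv.forall_congr_right]
  simp [h₁, h₂]

lemma mDist_eq_iInf (N₁ N₂ : MNorm n) :
    mDist n N₁ N₂ = ⨅ u : (Fin n → ℝ) ≃ₗ[ℝ] (Fin n → ℝ),
      opC n N₁ N₂ u.toLinearMap * opC n N₂ N₁ u.symm.toLinearMap := by
  simp only [mDist, iInf, Set.range, eq_comm]

lemma mDist_nonneg (N₁ N₂ : MNorm n) : 0 ≤ mDist n N₁ N₂ := by
  rw [mDist_eq_iInf]
  exact Real.iInf_nonneg fun _ => mul_nonneg (opC_nonneg _ _ _) (opC_nonneg _ _ _)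

lemma mDist_le (N₁ N₂ : MNorm n) (u : (Fin n → ℝ) ≃ₗ[ℝ] (Fin n → ℝ)) :
    mDist n N₁ N₂ ≤ opC n N₁ N₂ u.toLinearMap * opC n N₂ N₁ u.symm.toLinearMap := by
  rw [mDist_eq_iInf]
  exact ciInf_le ⟨0, by
    rintro _ ⟨v, rfl⟩
    exact mul_nonneg (opC_nonneg _ _ _) (opC_nonneg _ _ _)⟩ u

lemma one_le_mDist (hn : 0 < n) (N₁ N₂ : MNorm n) : 1 ≤ mDist n N₁ N₂ := by
  rw [mDist_eq_iInf]
  refine le_ciInf fun u => ?_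
  set x : Fin n → ℝ := Pi.single ⟨0, hn⟩ 1
  have hpos : 0 < N₁.toFun x := N₁.pos (by simp [x])
  have h := calc N₁.toFun x = N₁.toFun (u.symm (u x)) := by rw [u.symm_apply_apply]
    _ ≤ opC n N₂ N₁ u.symm.toLinearMap * N₂.toFun (u x) := le_opC_mul _ _ _ _
    _ ≤ opC n N₂ N₁ u.symm.toLinearMap * (opC n N₁ N₂ u.toLinearMap * N₁.toFun x) := by
        gcongr
        · exact opC_nonneg _ _ _
        · exact le_opC_mul _ _ u.toLinearMap x
  nlinarith

lemma mDist_le_mul (N₁ N₂ N₃ : MNorm n) :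
    mDist n N₁ N₃ ≤ mDist n N₁ N₂ * mDist n N₂ N₃ := by
  rw [mDist_eq_iInf N₁ N₂, Real.iInf_mul_of_nonneg (mDist_nonneg N₂ N₃)]
  refine le_ciInf fun u => ?_
  rw [mDist_eq_iInf N₂ N₃, Real.mul_iInf_of_nonneg
    (mul_nonneg (opC_nonneg _ _ _) (opC_nonneg _ _ _))]
  refine le_ciInf fun v => ?_
  have h := mDist_le N₁ N₃ (u.trans v)
  simp only [LinearEquiv.trans_symm, LinearEquiv.coe_trans] at h
  calc mDist n N₁ N₃
      ≤ opC n N₁ N₃ (v.toLinearMap ∘ₗ u.toLinearMap) *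
        opC n N₃ N₁ (u.symm.toLinearMap ∘ₗ v.symm.toLinearMap) := h
    _ ≤ (opC n N₂ N₃ v.toLinearMap * opC n N₁ N₂ u.toLinearMap) *
        (opC n N₂ N₁ u.symm.toLinearMap * opC n N₃ N₂ v.symm.toLinearMap) :=
        mul_le_mul (opC_comp_le _ _ _ _ _) (opC_comp_le _ _ _ _ _) (opC_nonneg _ _ _)
          (mul_nonneg (opC_nonneg _ _ _) (opC_nonneg _ _ _))
    _ = _ := by ring

lemma mDist_le_of_abs_sub_le {N N' : MNorm n} {t : ℝ} (ht₀ : 0 ≤ t) (ht₁ : t < 1)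
    (h : ∀ v, |N'.toFun v - N.toFun v| ≤ t * N.toFun v) :
    mDist n N N' ≤ (1 + t) / (1 - t) := by
  have h1t : 0 < 1 - t := by linarith
  calc mDist n N N'
      ≤ opC n N N' (LinearEquiv.refl ℝ _).toLinearMap *
        opC n N' N (LinearEquiv.refl ℝ _).symm.toLinearMap := mDist_le _ _ _
    _ ≤ (1 + t) * (1 - t)⁻¹ := by
        gcongr
        · exact opC_nonneg _ _ _
        · refine opC_le (by linarith) fun v => ?_
          show N'.toFun v ≤ (1 + t) * N.toFun v
          linarith [(abs_le.1 (h v)).2]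
        · refine opC_le (by positivity) fun v => ?_
          show N.toFun v ≤ (1 - t)⁻¹ * N'.toFun v
          rw [← div_eq_inv_mul, le_div_iff₀ h1t]
          linarith [(abs_le.1 (h v)).1]
    _ = (1 + t) / (1 - t) := by rw [div_eq_mul_inv]

lemma mDist_congr {N₁ N₂ N₁' N₂' : MNorm n} (h₁ : mnormSetoid n N₁ N₁')
    (h₂ : mnormSetoid n N₂ N₂') : mDist n N₁' N₂' = mDist n N₁ N₂ := by
  obtain ⟨e₁, he₁⟩ := h₁
  obtain ⟨e₂, he₂⟩ := h₂
  let conj : ((Fin n → ℝ) ≃ₗ[ℝ] (Fin n → ℝ)) ≃ ((Fin n → ℝ) ≃ₗ[ℝ] (Fin n → ℝ)) :=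
    { toFun := fun u => (e₁.symm.trans u).trans e₂
      invFun := fun u => (e₁.trans u).trans e₂.symm
      left_inv := fun u => by ext; simp
      right_inv := fun u => by ext; simp }
  rw [mDist_eq_iInf, mDist_eq_iInf]
  refine (Equiv.iInf_congr conj fun u => ?_).symm
  simp only [conj, Equiv.coe_fn_mk, LinearEquiv.trans_symm, LinearEquiv.symm_symm,
    LinearEquiv.coe_trans, LinearMap.comp_assoc]
  rw [opC_conj he₁ he₂, opC_conj he₂ he₁]

end BanachMazur

section MinkDist

variable {n : ℕ}

lemma minkDist_mk (N₁ N₂ : MNorm n) :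
    minkDist n (Quotient.mk _ N₁) (Quotient.mk _ N₂) = Real.log (mDist n N₁ N₂) := by
  unfold minkDist
  rw [mDist_congr (Quotient.mk_out N₁) (Quotient.mk_out N₂)]

lemma minkDist_nonneg (hn : 0 < n) (P Q : Mink n) : 0 ≤ minkDist n P Q :=
  Real.log_nonneg (one_le_mDist hn _ _)

lemma minkDist_triangle (hn : 0 < n) (P Q R : Mink n) :
    minkDist n P R ≤ minkDist n P Q + minkDist n Q R := by
  have hpos : ∀ N₁ N₂ : MNorm n, 0 < mDist n N₁ N₂ :=
    fun N₁ N₂ => one_pos.trans_le (one_le_mDist hn N₁ N₂)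
  rw [minkDist, minkDist, minkDist, ← Real.log_mul (hpos _ _).ne' (hpos _ _).ne']
  exact Real.log_le_log (hpos _ _) (mDist_le_mul _ _ _)

open Filter Topology in
lemma Mink.tendsto_nhds_of_tendsto_minkDist (hn : 0 < n) {α : Type*} {l : Filter α}
    {f : α → Mink n} {P : Mink n} (h : Tendsto (fun x => minkDist n P (f x)) l (𝓝 0)) :
    Tendsto f l (𝓝 P) := by
  refine TopologicalSpace.tendsto_nhds_generateFrom_iff.2 ?_
  rintro _ ⟨R, ε, -, rfl⟩ (hP : minkDist n R P < ε)
  filter_upwards [h.eventually_lt_const (sub_pos.2 hP)] with x hx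
  show minkDist n R (f x) < ε
  linarith [minkDist_triangle hn R P (f x)]

end MinkDist

section Tuple

variable {X : Type*} [NormedAddCommGroup X] [NormedSpace ℝ X] {m : ℕ}

def tupleNorm (a : Fin m → X) (ha : LinearIndependent ℝ a) : MNorm m where
  toFun v := ‖Fintype.linearCombination ℝ a v‖
  add_le' x y := by
    simpa only [map_add] using norm_add_le _ _
  smul_eq' c x := by
    simp only [map_smul, norm_smul, Real.norm_eq_abs]
  eq_zero' x hx :=
    ha.fintypeLinearCombination_injective (by rw [map_zero]; exact norm_eq_zero.1 hx)

def supMNorm (m : ℕ) : MNorm m where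
  toFun x := ‖x‖
  add_le' := norm_add_le
  smul_eq' c x := by simp only [norm_smul, Real.norm_eq_abs]
  eq_zero' _ := norm_eq_zero.1

/-- The isometry class of `span a` (a junk value when `a` is linearly dependent). -/
def tupleClass (a : Fin m → X) : Mink m :=
  open Classical in
  if ha : LinearIndependent ℝ a then Quotient.mk _ (tupleNorm a ha)
  else Quotient.mk _ (supMNorm m)

lemma tupleClass_of_linearIndependent {a : Fin m → X} (ha : LinearIndependent ℝ a) :
    tupleClass a = Quotient.mk _ (tupleNorm a ha) :=
  dif_pos ha

lemma norm_linearCombination_le (a : Fin m → X) (v : Fin m → ℝ) :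
    ‖Fintype.linearCombination ℝ a v‖ ≤ m * ‖a‖ * ‖v‖ := by
  rw [Fintype.linearCombination_apply]
  calc ‖∑ i, v i • a i‖ ≤ ∑ i, ‖v i‖ * ‖a i‖ := by
        simpa only [norm_smul] using norm_sum_le Finset.univ fun i => v i • a i
    _ ≤ ∑ _i : Fin m, ‖v‖ * ‖a‖ := by
        gcongr with i
        · exact norm_le_pi_norm v i
        · exact norm_le_pi_norm a i
    _ = m * ‖a‖ * ‖v‖ := by
        rw [Finset.sum_const, Finset.card_univ, Fintype.card_fin, nsmul_eq_mul]; ring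

lemma abs_norm_linearCombination_sub_le (a b : Fin m → X) (v : Fin m → ℝ) :
    |‖Fintype.linearCombination ℝ b v‖ - ‖Fintype.linearCombination ℝ a v‖| ≤
      m * ‖b - a‖ * ‖v‖ := by
  have hsub : Fintype.linearCombination ℝ (b - a) v =
      Fintype.linearCombination ℝ b v - Fintype.linearCombination ℝ a v := by
    simp only [Fintype.linearCombination_apply, Pi.sub_apply, smul_sub, Finset.sum_sub_distrib]
  exact (abs_norm_sub_norm_le _ _).trans (hsub ▸ norm_linearCombination_le (b - a) v)

open Filter Topology

lemma tendsto_minkDist_tupleClass (hm : 0 < m) {a : Fin m → X} (ha : LinearIndependent ℝ a) :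
    Tendsto (fun b => minkDist m (tupleClass a) (tupleClass b))
      (𝓝[{b | LinearIndependent ℝ b}] a) (𝓝 0) := by
  obtain ⟨c, hc, hcN⟩ := (tupleNorm a ha).exists_pos_mul_norm_le
  set t : (Fin m → X) → ℝ := fun b => m * ‖b - a‖ / c
  have ht : Tendsto t (𝓝[{b | LinearIndependent ℝ b}] a) (𝓝 0) := by
    have : Tendsto (fun b => ‖b - a‖) (𝓝 a) (𝓝 0) := tendsto_iff_norm_sub_tendsto_zero.1 tendsto_id
    simpa [t] using ((this.const_mul (m : ℝ)).div_const c).mono_left nhdsWithin_le_nhds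
  have hbound : Tendsto ((fun s : ℝ => Real.log ((1 + s) / (1 - s))) ∘ t)
      (𝓝[{b | LinearIndependent ℝ b}] a) (𝓝 0) := by
    have hcont : ContinuousAt (fun s : ℝ => Real.log ((1 + s) / (1 - s))) 0 := by
      fun_prop (disch := norm_num)
    simpa using hcont.tendsto.comp ht
  refine tendsto_of_tendsto_of_tendsto_of_le_of_le' tendsto_const_nhds hbound
    (Eventually.of_forall fun b => minkDist_nonneg hm _ _) ?_
  filter_upwards [self_mem_nhdsWithin, ht.eventually_lt_const one_pos] with b hb ht₁
  rw [tupleClass_of_linearIndependent ha, tupleClass_of_linearIndependent hb, minkDist_mk]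
  refine Real.log_le_log (one_pos.trans_le (one_le_mDist hm _ _))
    (mDist_le_of_abs_sub_le (by positivity) ht₁ fun v => ?_)
  calc |‖Fintype.linearCombination ℝ b v‖ - ‖Fintype.linearCombination ℝ a v‖|
      ≤ m * ‖b - a‖ * ‖v‖ := abs_norm_linearCombination_sub_le a b v
    _ ≤ m * ‖b - a‖ * (‖Fintype.linearCombination ℝ a v‖ / c) := by
        gcongr
        rw [le_div_iff₀ hc, mul_comm]
        exact hcN v
    _ = t b * ‖Fintype.linearCombination ℝ a v‖ := by simp only [t]; ring

lemma continuousOn_tupleClass :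
    ContinuousOn (tupleClass (X := X) (m := m)) {a | LinearIndependent ℝ a} := by
  rcases Nat.eq_zero_or_pos m with rfl | hm
  · exact (continuous_of_const fun _ _ => Subsingleton.elim _ _).continuousOn
  · exact fun a ha => Mink.tendsto_nhds_of_tendsto_minkDist hm (tendsto_minkDist_tupleClass hm ha)

end Tuple

section Image

variable {X : Type u} [NormedAddCommGroup X] [NormedSpace ℝ X] {m : ℕ}

lemma tupleClass_mem_HmSet {a : Fin m → X} (ha : LinearIndependent ℝ a) :
    tupleClass a ∈ HmSet m X := by
  obtain ⟨e, he⟩ := Quotient.mk_out (s := mnormSetoid m) (tupleNorm a ha)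
  refine ⟨Fintype.linearCombination ℝ a ∘ₗ e.toLinearMap,
    ha.fintypeLinearCombination_injective.comp e.injective, fun v => ?_⟩
  rw [tupleClass_of_linearIndependent ha]
  exact he v

lemma tupleClass_eq_of_forall_mem_range {f : (Fin m → ℝ) →ₗ[ℝ] X} {P : Mink m}
    (hf : ∀ v, ‖f v‖ = P.out.toFun v) {c : Fin m → X} (hc : LinearIndependent ℝ c)
    (hcf : ∀ i, c i ∈ LinearMap.range f) : tupleClass c = P := by
  choose w hw using hcf
  have hcomp : f ∘ₗ Fintype.linearCombination ℝ w = Fintype.linearCombination ℝ c := by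
    ext v
    simp [Fintype.linearCombination_apply, hw]
  have hinj : Function.Injective (Fintype.linearCombination ℝ w) := fun x y hxy =>
    hc.fintypeLinearCombination_injective (by rw [← hcomp, LinearMap.comp_apply, hxy]; rfl)
  rw [tupleClass_of_linearIndependent hc, ← Quotient.out_eq P]
  refine Quotient.sound ⟨LinearEquiv.ofInjectiveEndo _ hinj, fun v => ?_⟩
  rw [LinearEquiv.coe_ofInjectiveEndo, ← hf, ← LinearMap.comp_apply, hcomp]
  rfl

lemma HmSet_eq_image_setOf_linearIndependent :
    HmSet m X = tupleClass '' {a : Fin m → X | LinearIndependent ℝ a} := by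
  refine subset_antisymm ?_ (Set.image_subset_iff.2 fun a ha => tupleClass_mem_HmSet ha)
  rintro P ⟨f, hf, hfP⟩
  have hc : LinearIndependent ℝ (f ∘ Pi.basisFun ℝ (Fin m)) :=
    (Pi.basisFun ℝ (Fin m)).linearIndependent.map' f (LinearMap.ker_eq_bot.2 hf)
  exact ⟨_, hc, tupleClass_eq_of_forall_mem_range hfP hc fun i => LinearMap.mem_range_self f _⟩

lemma isCompact_setOf_orthonormal {ι E : Type*} [Fintype ι] [NormedAddCommGroup E]
    [InnerProductSpace ℝ E] [FiniteDimensional ℝ E] :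
    IsCompact {v : ι → E | Orthonormal ℝ v} := by
  refine (isCompact_closedBall (0 : ι → E) 1).of_isClosed_subset ?_ fun v hv => ?_
  · classical
    have : {v : ι → E | Orthonormal ℝ v} =
        ⋂ i, ⋂ j, {v | inner ℝ (v i) (v j) = if i = j then (1 : ℝ) else 0} := by
      ext v; simp [orthonormal_iff_ite]
    rw [this]
    exact isClosed_iInter fun i => isClosed_iInter fun j =>
      isClosed_eq (by fun_prop) continuous_const
  · rw [mem_closedBall_zero_iff, pi_norm_le_iff_of_nonneg zero_le_one]
    exact fun i => (hv.1 i).le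

variable [FiniteDimensional ℝ X]

def orthonormalFrames (m : ℕ) (X : Type u) [NormedAddCommGroup X] [NormedSpace ℝ X]
    [FiniteDimensional ℝ X] : Set (Fin m → X) :=
  {a | Orthonormal ℝ (toEuclidean ∘ a)}

lemma isCompact_orthonormalFrames : IsCompact (orthonormalFrames m X) :=
  (Homeomorph.piCongrRight fun _ => toEuclidean.toHomeomorph).isCompact_preimage.2
    isCompact_setOf_orthonormal

lemma orthonormalFrames_subset_setOf_linearIndependent :
    orthonormalFrames m X ⊆ {a | LinearIndependent ℝ a} :=
  fun _ ha => ha.linearIndependent.of_comp toEuclidean.toLinearMap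

lemma exists_mem_orthonormalFrames_forall_mem (V : Submodule ℝ X)
    (hV : Module.finrank ℝ V = m) : ∃ a ∈ orthonormalFrames m X, ∀ i, a i ∈ V := by
  let S : Submodule ℝ (EuclideanSpace ℝ (Fin (Module.finrank ℝ X))) :=
    V.map (toEuclidean : X ≃L[ℝ] _).toLinearEquiv.toLinearMap
  have hS : Module.finrank ℝ S = m := by
    rw [← hV]; exact LinearEquiv.finrank_map_eq _ _
  let b := (stdOrthonormalBasis ℝ S).reindex (finCongr hS)
  refine ⟨fun i => toEuclidean.symm (b i : EuclideanSpace ℝ _), ?_, fun i => ?_⟩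
  · rw [orthonormalFrames, Set.mem_ofPred_eq]
    convert b.orthonormal.comp_linearIsometry S.subtypeₗᵢ using 1
    ext i : 1
    simp
  · obtain ⟨x, hx, hbx⟩ := Submodule.mem_map.1 (b i).2
    change toEuclidean.symm (b i : EuclideanSpace ℝ _) ∈ V
    rw [← hbx]
    simpa using hx

lemma HmSet_eq_image_orthonormalFrames :
    HmSet m X = tupleClass '' orthonormalFrames m X := by
  refine subset_antisymm ?_ ?_
  · rintro P ⟨f, hf, hfP⟩
    obtain ⟨a, ha, haf⟩ := exists_mem_orthonormalFrames_forall_mem (m := m) (LinearMap.range f)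
      (by simp [LinearMap.finrank_range_of_inj hf])
    exact ⟨a, ha, tupleClass_eq_of_forall_mem_range hfP
      (orthonormalFrames_subset_setOf_linearIndependent ha) haf⟩
  · rw [HmSet_eq_image_setOf_linearIndependent]
    exact Set.image_mono orthonormalFrames_subset_setOf_linearIndependent

end Image

section PathConnected

lemma Submodule.exists_notMem_notMem_of_ne_top {R M : Type*} [Ring R] [AddCommGroup M]
    [Module R M] {A B : Submodule R M} (hA : A ≠ ⊤) (hB : B ≠ ⊤) : ∃ v, v ∉ A ∧ v ∉ B := by
  by_contra! h
  have hcover : ((⊤ : Submodule R M) : Set M) ⊆ A ∪ B := fun v _ => or_iff_not_imp_left.2 (h v)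
  rcases AddSubgroupClass.subset_union.1 hcover with hA' | hB'
  exacts [hA (top_le_iff.1 hA'), hB (top_le_iff.1 hB')]

lemma IsPathConnected.preimage_of_rightInverse {E F : Type*} [NormedAddCommGroup E]
    [NormedSpace ℝ E] [NormedAddCommGroup F] [NormedSpace ℝ F] (f : E →L[ℝ] F) (g : F →L[ℝ] E)
    (hfg : ∀ y, f (g y) = y) {S : Set F} (hS : IsPathConnected S) :
    IsPathConnected (f ⁻¹' S) := by
  -- `x = g (f x) + (x - g (f x))` splits `f ⁻¹' S` as the image of `S × E`.
  have h : f ⁻¹' S = (fun p : F × E => g p.1 + (p.2 - g (f p.2))) '' (S ×ˢ Set.univ) := by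
    ext x
    constructor
    · exact fun hx => ⟨(f x, x), ⟨hx, trivial⟩, by simp⟩
    · rintro ⟨⟨y, z⟩, ⟨hy, -⟩, rfl⟩
      simpa [hfg] using hy
  rw [h]
  exact (hS.prod isPathConnected_univ).image (by fun_prop)

lemma linearIndependent_finSnoc_iff_comp {K V W : Type*} [DivisionRing K] [AddCommGroup V] [Module K V]
    [AddCommGroup W] [Module K W] (f : V →ₗ[K] W) {v : V} (hv : v ≠ 0)
    (hker : LinearMap.ker f = K ∙ v) {k : ℕ} (c : Fin k → V) :
    LinearIndependent K (Fin.snoc c v : Fin (k + 1) → V) ↔ LinearIndependent K (f ∘ c) := by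
  rw [linearIndependent_finSnoc, ← Submodule.disjoint_span_singleton' hv, ← hker]
  exact ⟨fun ⟨hc, hd⟩ => (f.linearIndependent_iff_of_disjoint hd).2 hc,
    fun h => ⟨h.of_comp f, Submodule.range_ker_disjoint h⟩⟩

variable {E : Type*} [NormedAddCommGroup E] [NormedSpace ℝ E] {k : ℕ}

lemma JoinedIn.finSnoc_setOf_linearIndependent {c : Fin k → E} (hc : LinearIndependent ℝ c)
    {x y : E} (h : JoinedIn (Submodule.span ℝ (Set.range c) : Set E)ᶜ x y) :
    JoinedIn {a : Fin (k + 1) → E | LinearIndependent ℝ a} (Fin.snoc c x) (Fin.snoc c y) := by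
  refine (h.map (Continuous.finSnoc (A := fun _ => E) continuous_const continuous_id)).mono ?_
  rintro _ ⟨z, hz, rfl⟩
  exact linearIndependent_finSnoc.2 ⟨hc, hz⟩

lemma joinedIn_finSnoc_init [FiniteDimensional ℝ E] (hk : k + 2 ≤ Module.finrank ℝ E)
    {a : Fin (k + 1) → E} (ha : LinearIndependent ℝ a) {v : E}
    (hv : v ∉ Submodule.span ℝ (Set.range (Fin.init a))) :
    JoinedIn {a : Fin (k + 1) → E | LinearIndependent ℝ a} a (Fin.snoc (Fin.init a) v) := by
  obtain ⟨hinit, hlast⟩ := linearIndependent_finSucc'.1 ha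
  set U := Submodule.span ℝ (Set.range (Fin.init a))
  have hcodim : 1 < Module.rank ℝ (E ⧸ U) := by
    have hU : Module.finrank ℝ U ≤ k := by
      simpa [Set.finrank] using finrank_range_le_card (R := ℝ) (Fin.init a)
    have := U.finrank_quotient_add_finrank
    rw [← Module.finrank_eq_rank]
    exact_mod_cast (by omega : 1 < Module.finrank ℝ (E ⧸ U))
  have h := ((isPathConnected_compl_of_one_lt_codim hcodim).joinedIn _ hlast _ hv)
  simpa using JoinedIn.finSnoc_setOf_linearIndependent hinit h

lemma isPathConnected_setOf_linearIndependent_finSnoc [FiniteDimensional ℝ E] {v : E}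
    (hv : v ≠ 0) {W : Submodule ℝ E} (hW : IsCompl W (ℝ ∙ v))
    (hWk : IsPathConnected {c : Fin k → W | LinearIndependent ℝ c}) :
    IsPathConnected {c : Fin k → E | LinearIndependent ℝ (Fin.snoc c v : Fin (k + 1) → E)} := by
  let π := W.projectionOnto (ℝ ∙ v) hW
  have h : {c : Fin k → E | LinearIndependent ℝ (Fin.snoc c v : Fin (k + 1) → E)} =
      (π.compLeft (Fin k)).toContinuousLinearMap ⁻¹' {c | LinearIndependent ℝ c} := by
    ext c
    exact linearIndependent_finSnoc_iff_comp π hv (W.ker_projectionOnto hW) c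
  rw [h]
  exact hWk.preimage_of_rightInverse _ (W.subtype.compLeft (Fin k)).toContinuousLinearMap
    fun c => funext fun i => W.projectionOnto_apply_left hW (c i)

theorem isPathConnected_setOf_linearIndependent [FiniteDimensional ℝ E]
    (hk : k < Module.finrank ℝ E) : IsPathConnected {a : Fin k → E | LinearIndependent ℝ a} := by
  induction k generalizing E with
  | zero =>
    refine isPathConnected_iff.2 ⟨⟨Fin.elim0, linearIndependent_empty_type⟩, fun x hx y _ => ?_⟩
    rw [Subsingleton.elim y x]
    exact JoinedIn.refl hx
  | succ k ih =>
    refine isPathConnected_iff.2 ⟨⟨_, (Module.finBasis ℝ E).linearIndependent.comp _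
      (Fin.castLE_injective hk.le)⟩, fun a ha b hb => ?_⟩
    have hspan (c : Fin (k + 1) → E) : Submodule.span ℝ (Set.range c) ≠ ⊤ := fun h => by
      have := finrank_le_of_span_eq_top h
      simp only [Fintype.card_fin] at this
      omega
    obtain ⟨v, hva, hvb⟩ := Submodule.exists_notMem_notMem_of_ne_top (hspan a) (hspan b)
    have hv : v ≠ 0 := by rintro rfl; exact hva (Submodule.zero_mem _)
    have hinit {c : Fin (k + 1) → E} (hc : v ∉ Submodule.span ℝ (Set.range c)) :
        v ∉ Submodule.span ℝ (Set.range (Fin.init c)) :=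
      fun h => hc (Submodule.span_mono (Set.range_comp_subset_range _ _) h)
    obtain ⟨W, hW⟩ := (ℝ ∙ v).exists_isCompl
    have hWk : k < Module.finrank ℝ W := by
      have := Submodule.finrank_add_eq_of_isCompl hW
      rw [finrank_span_singleton hv] at this
      omega
    have hT := isPathConnected_setOf_linearIndependent_finSnoc hv hW.symm (ih hWk)
    have hsnoc {c : Fin (k + 1) → E} (hc : LinearIndependent ℝ c)
        (hvc : v ∉ Submodule.span ℝ (Set.range c)) :
        LinearIndependent ℝ (Fin.snoc (Fin.init c) v : Fin (k + 1) → E) :=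
      linearIndependent_finSnoc.2 ⟨(linearIndependent_finSucc'.1 hc).1, hinit hvc⟩
    have hmid : JoinedIn {a : Fin (k + 1) → E | LinearIndependent ℝ a}
        (Fin.snoc (Fin.init a) v) (Fin.snoc (Fin.init b) v) :=
      ((hT.image (Continuous.finSnoc (A := fun _ => E) continuous_id continuous_const)).joinedIn
        _ ⟨_, hsnoc ha hva, rfl⟩ _ ⟨_, hsnoc hb hvb, rfl⟩).mono
        (Set.image_subset_iff.2 fun _ hc => hc)
    exact ((joinedIn_finSnoc_init (by omega) ha (hinit hva)).trans hmid).trans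
      (joinedIn_finSnoc_init (by omega) hb (hinit hvb)).symm

end PathConnected

/-- For a finite-dimensional real Banach space `X` and `m < dim X`,
the set `H_m(X)` of isometry classes of `m`-dimensional subspaces of `X`, with the
Banach–Mazur metric topology, is a compact and connected (metric) space. -/
theorem HmSet_isCompact_isConnected
    (X : Type u) [NormedAddCommGroup X] [NormedSpace ℝ X] [FiniteDimensional ℝ X]
    (m : ℕ) (hm : m < Module.finrank ℝ X) :
    IsCompact (HmSet m X) ∧ IsConnected (HmSet m X) := by
  refine ⟨?_, ?_⟩
  · rw [HmSet_eq_image_orthonormalFrames]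
    exact isCompact_orthonormalFrames.image_of_continuousOn
      (continuousOn_tupleClass.mono orthonormalFrames_subset_setOf_linearIndependent)
  · rw [HmSet_eq_image_setOf_linearIndependent]
    exact (isPathConnected_setOf_linearIndependent hm).isConnected.image _ continuousOn_tupleClass
end
end
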